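/- Let E be a real Banach space and let μ be a Radon probability measure on B_{E*} (with the weak* topology) whose barycenter lies on the unit sphere S_{E*}. Then for every ε > 0 there exists a weak* compact convex set C ⊆ S_{E*} with μ(C) > 1 − ε. -/

import Mathlib

open MeasureTheory
open scoped ENNReal

noncomputable section

/-- The closed unit ball of the dual of a real Banach space `E`, equipped with the weak*
topology. -/
abbrev DualBall (E : Type*) [NormedAddCommGroup E] [NormedSpace ℝ E] :=
  {φ : WeakDual ℝ E // ‖WeakDual.toStrongDual φ‖ ≤ 1}

/-- The Borel σ-algebra on `B_{E*}`. -/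
instance ballBorelMeasurableSpace (E : Type*) [NormedAddCommGroup E] [NormedSpace ℝ E] :
    MeasurableSpace (DualBall E) := borel _

instance (E : Type*) [NormedAddCommGroup E] [NormedSpace ℝ E] :
    BorelSpace (DualBall E) := ⟨rfl⟩

/-!
Choose vectors `x k` of norm at most `1` with `x₀ (x k)` so close to `1` that, by Markov's
inequality applied to `1 - φ (x k)` (nonnegative on the ball, of mean `1 - x₀ (x k)`), the slab
`{φ | φ (x k) < 1 - 1/(k+1)}` has measure at most `η k`, where `∑ η k < ε`. The intersection of
the complementary half-spaces is weak* closed in the compact ball, convex, and carries measure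
`> 1 - ε`; every `φ` in it satisfies `φ (x k) ≥ 1 - 1/(k+1)` for all `k`, hence has norm `1`.
-/

open scoped NNReal

theorem ContinuousLinearMap.exists_norm_le_one_lt_apply {E : Type*} [NormedAddCommGroup E]
    [NormedSpace ℝ E] (f : StrongDual ℝ E) {r : ℝ} (hr : r < ‖f‖) :
    ∃ y : E, ‖y‖ ≤ 1 ∧ r < f y := by
  obtain ⟨y, hy, hry⟩ := f.exists_lt_apply_of_lt_opNorm hr
  rw [Real.norm_eq_abs] at hry
  rcases lt_abs.1 hry with hpos | hneg
  · exact ⟨y, hy.le, hpos⟩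
  · exact ⟨-y, by simpa using hy.le, by simpa using hneg⟩

theorem ContinuousLinearMap.apply_le_norm_of_norm_le_one {E : Type*} [SeminormedAddCommGroup E]
    [NormedSpace ℝ E] (f : StrongDual ℝ E) {x : E} (hx : ‖x‖ ≤ 1) : f x ≤ ‖f‖ :=
  (le_abs_self _).trans (by simpa using f.le_opNorm_of_le hx)

theorem MeasureTheory.measure_lt_one_sub_le {α : Type*} [MeasurableSpace α] {μ : Measure α}
    [IsProbabilityMeasure μ] {f : α → ℝ} (hf : Integrable f μ) (hf_le : ∀ᵐ a ∂μ, f a ≤ 1)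
    {t : ℝ} (ht : 0 < t) :
    μ {a | f a < 1 - t} ≤ ENNReal.ofReal ((1 - ∫ a, f a ∂μ) / t) := by
  have hgap_nonneg : 0 ≤ᵐ[μ] fun a => 1 - f a := hf_le.mono fun a ha => sub_nonneg.2 ha
  have hmarkov := mul_meas_ge_le_integral_of_nonneg hgap_nonneg ((integrable_const 1).sub hf) t
  rw [integral_sub (integrable_const 1) hf, integral_const, probReal_univ, one_smul] at hmarkov
  have hsub : {a | f a < 1 - t} ⊆ {a | t ≤ 1 - f a} := fun a (ha : f a < 1 - t) =>
    show t ≤ 1 - f a by linarith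
  calc μ {a | f a < 1 - t} ≤ μ {a | t ≤ 1 - f a} := measure_mono hsub
    _ = ENNReal.ofReal (μ.real {a | t ≤ 1 - f a}) := (ofReal_measureReal (measure_ne_top μ _)).symm
    _ ≤ ENNReal.ofReal ((1 - ∫ a, f a ∂μ) / t) :=
      ENNReal.ofReal_le_ofReal ((le_div_iff₀' ht).2 hmarkov)

theorem MeasureTheory.one_sub_lt_measureReal_of_measure_compl_lt {α : Type*} [MeasurableSpace α]
    {μ : Measure α} [IsProbabilityMeasure μ] {s : Set α} (hs : MeasurableSet s) {ε : ℝ}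
    (h : μ sᶜ < ENNReal.ofReal ε) : 1 - ε < μ.real s := by
  have hcompl : μ.real sᶜ < ε := ENNReal.toReal_lt_of_lt_ofReal h
  rw [measureReal_compl hs, probReal_univ] at hcompl
  linarith

namespace DualBall

variable {E : Type*} [NormedAddCommGroup E] [NormedSpace ℝ E]

instance : CompactSpace (DualBall E) := by
  have hball := WeakDual.isCompact_closedBall (𝕜 := ℝ) (E := E) 0 1
  simp only [Metric.closedBall, dist_zero_right] at hball
  exact isCompact_iff_compactSpace.1 hball

theorem continuous_apply (x : E) : Continuous fun φ : DualBall E => φ.1 x :=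
  (WeakDual.eval_continuous x).comp continuous_subtype_val

theorem apply_le_one (φ : DualBall E) {x : E} (hx : ‖x‖ ≤ 1) : φ.1 x ≤ 1 :=
  ((WeakDual.toStrongDual φ.1).apply_le_norm_of_norm_le_one hx).trans φ.2

theorem integrable_apply (μ : Measure (DualBall E)) [IsFiniteMeasure μ] (x : E) :
    Integrable (fun φ : DualBall E => φ.1 x) μ :=
  (continuous_apply x).integrable_of_hasCompactSupport (HasCompactSupport.of_compactSpace _)

end DualBall

section NearNormingSet

variable {E : Type*} [NormedAddCommGroup E] [NormedSpace ℝ E]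

def nearNormingSet (x : ℕ → E) : Set (WeakDual ℝ E) :=
  ⋂ k : ℕ, {φ | 1 - 1 / (k + 1 : ℝ) ≤ φ (x k)}

theorem isClosed_nearNormingSet (x : ℕ → E) : IsClosed (nearNormingSet x) :=
  isClosed_iInter fun k => isClosed_le continuous_const (WeakDual.eval_continuous (x k))

theorem convex_nearNormingSet (x : ℕ → E) : Convex ℝ (nearNormingSet x) :=
  convex_iInter fun _ => convex_halfSpace_ge ⟨fun _ _ => rfl, fun _ _ => rfl⟩ _

theorem one_le_norm_of_mem_nearNormingSet {x : ℕ → E} (hx : ∀ k, ‖x k‖ ≤ 1)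
    {φ : WeakDual ℝ E} (hφ : φ ∈ nearNormingSet x) : 1 ≤ ‖WeakDual.toStrongDual φ‖ := by
  refine le_of_forall_pos_lt_add fun δ hδ => ?_
  obtain ⟨k, hk⟩ := exists_nat_one_div_lt hδ
  have hφk : 1 - 1 / (k + 1 : ℝ) ≤ φ (x k) := Set.mem_iInter.1 hφ k
  have hnorm := (WeakDual.toStrongDual φ).apply_le_norm_of_norm_le_one (hx k)
  change φ (x k) ≤ _ at hnorm
  linarith

theorem measure_compl_nearNormingSet_le (μ : Measure (DualBall E)) [IsProbabilityMeasure μ]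
    {x₀ : WeakDual ℝ E} (hbary : ∀ x : E, x₀ x = ∫ φ, (φ : DualBall E).1 x ∂μ)
    {x : ℕ → E} (hx : ∀ k, ‖x k‖ ≤ 1) {η : ℕ → ℝ≥0} (hη : ∀ k, 1 - η k / (k + 1) < x₀ (x k)) :
    μ (Subtype.val ⁻¹' nearNormingSet x)ᶜ ≤ ∑' k, (η k : ℝ≥0∞) := by
  have hslab : ∀ k : ℕ, μ {φ : DualBall E | φ.1 (x k) < 1 - 1 / (k + 1 : ℝ)} ≤ η k := by
    intro k
    refine (measure_lt_one_sub_le (DualBall.integrable_apply μ (x k))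
      (Filter.Eventually.of_forall fun φ => φ.apply_le_one (hx k)) (by positivity)).trans ?_
    rw [← hbary, ← ENNReal.ofReal_coe_nnreal]
    refine ENNReal.ofReal_le_ofReal ?_
    have hηk := hη k
    rw [div_eq_mul_one_div] at hηk
    rw [div_le_iff₀ (by positivity)]
    linarith
  calc μ (Subtype.val ⁻¹' nearNormingSet x)ᶜ
      = μ (⋃ k : ℕ, {φ : DualBall E | φ.1 (x k) < 1 - 1 / (k + 1 : ℝ)}) := by
        simp only [nearNormingSet, Set.preimage_iInter, Set.compl_iInter, Set.preimage_ofPred_eq,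
          Set.compl_ofPred, not_le]
    _ ≤ ∑' k : ℕ, μ {φ : DualBall E | φ.1 (x k) < 1 - 1 / (k + 1 : ℝ)} := measure_iUnion_le _
    _ ≤ ∑' k, (η k : ℝ≥0∞) := ENNReal.tsum_le_tsum hslab

end NearNormingSet

theorem exists_compact_convex_subset_of_sphere_of_large_measure_general
    (E : Type*) [NormedAddCommGroup E] [NormedSpace ℝ E]
    (μ : Measure (DualBall E)) [IsProbabilityMeasure μ]
    (x₀ : WeakDual ℝ E) (hx₀ : ‖WeakDual.toStrongDual x₀‖ = 1)
    (hbary : ∀ x : E, x₀ x = ∫ φ, (φ : DualBall E).1 x ∂μ)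
    (ε : ℝ) (hε : 0 < ε) :
    ∃ C : Set (DualBall E), IsCompact C ∧
      (∀ φ ∈ C, ‖WeakDual.toStrongDual (φ : DualBall E).1‖ = 1) ∧
      (∀ φ ∈ C, ∀ ψ ∈ C, ∀ (ξ : DualBall E) (a b : ℝ), 0 ≤ a → 0 ≤ b → a + b = 1 →
        (ξ.1 : WeakDual ℝ E) = a • (φ : DualBall E).1 + b • (ψ : DualBall E).1 → ξ ∈ C) ∧
      1 - ε < (μ C).toReal := by
  obtain ⟨η, hη_pos, hη_sum⟩ := ENNReal.exists_pos_sum_of_countable (ENNReal.ofReal_pos.2 hε).ne' ℕ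
  have hnorming : ∀ k : ℕ, ∃ y : E, ‖y‖ ≤ 1 ∧ 1 - η k / (k + 1) < x₀ y := fun k =>
    (WeakDual.toStrongDual x₀).exists_norm_le_one_lt_apply <| by
      rw [hx₀]
      exact sub_lt_self 1 (by have := hη_pos k; positivity)
  choose x hx_norm hx_lt using hnorming
  have hclosed : IsClosed (Subtype.val ⁻¹' nearNormingSet x : Set (DualBall E)) :=
    (isClosed_nearNormingSet x).preimage continuous_subtype_val
  refine ⟨_, hclosed.isCompact,
    fun φ hφ => le_antisymm φ.2 (one_le_norm_of_mem_nearNormingSet hx_norm hφ),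
    fun φ hφ ψ hψ ξ a b ha hb hab hξ => ?_, ?_⟩
  · change ξ.1 ∈ nearNormingSet x
    rw [hξ]
    exact convex_nearNormingSet x hφ hψ ha hb hab
  · exact one_sub_lt_measureReal_of_measure_compl_lt hclosed.measurableSet
      ((measure_compl_nearNormingSet_le μ hbary hx_norm hx_lt).trans_lt hη_sum)

/-- If `μ` is a Radon probability measure on `B_{E*}` whose barycenter lies
on the unit sphere, then for every `ε > 0` there is a weak* compact convex set `C ⊆ S_{E*}`
with `μ(C) > 1 - ε`. -/
theorem exists_compact_convex_subset_of_sphere_of_large_measure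
    (E : Type*) [NormedAddCommGroup E] [NormedSpace ℝ E] [CompleteSpace E]
    (μ : Measure (DualBall E)) [IsProbabilityMeasure μ] [μ.Regular]
    (x₀ : WeakDual ℝ E) (hx₀ : ‖WeakDual.toStrongDual x₀‖ = 1)
    (hbary : ∀ x : E, x₀ x = ∫ φ, (φ : DualBall E).1 x ∂μ)
    (ε : ℝ) (hε : 0 < ε) :
    ∃ C : Set (DualBall E), IsCompact C ∧
      (∀ φ ∈ C, ‖WeakDual.toStrongDual (φ : DualBall E).1‖ = 1) ∧
      (∀ φ ∈ C, ∀ ψ ∈ C, ∀ (ξ : DualBall E) (a b : ℝ), 0 ≤ a → 0 ≤ b → a + b = 1 →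
        (ξ.1 : WeakDual ℝ E) = a • (φ : DualBall E).1 + b • (ψ : DualBall E).1 → ξ ∈ C) ∧
      1 - ε < (μ C).toReal :=
  exists_compact_convex_subset_of_sphere_of_large_measure_general E μ x₀ hx₀ hbary ε hε
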